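/- arXiv:2210.16506 — 2 statements merged into one kernel-verified Lean document; each statement's English description precedes it below -/
import Mathlib

section
/- In the no-limit clairvoyance game with n = 2, in the perturbed game G_ε where player 1 must satisfy φ(W,1) + φ(L,1) ≥ ε, the profile in which player 1 bets 2 with probability 1 - 2ε/3 and 1 with probability 2ε/3 with a winning hand, bets 2 with probability 2(3-2ε)/9, bets 1 with probability ε/3, and checks with probability (3+ε)/9 with a losing hand, and player 2 calls a bet of 2 with probability 1/3 and a bet of 1 with probability 5/9, is a Nash equilibrium of G_ε, with player 1's expected payoff equal to 1/3 - ε/18. -/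
/-!  A concrete model of the no-limit clairvoyance game with integer bet sizes.
Player 1 is dealt a winning hand (`true`) or losing hand (`false`) with probability
1/2 each, bets an integer `x ∈ {0,…,n}` (0 = check), and player 2 calls or folds.
A strategy for player 1 assigns to each hand a probability distribution over bet
sizes; a strategy for player 2 assigns to each bet size a calling probability. -/

/-- `s` is a valid strategy for player 1 in the clairvoyance game with stack `n`. -/
def IsStrat1 (n : ℕ) (s : Bool → ℕ → ℝ) : Prop :=
  (∀ h x, 0 ≤ s h x) ∧ (∀ h : Bool, ∑ x ∈ Finset.range (n + 1), s h x = 1)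

/-- `s` is a valid strategy for player 2 (a calling probability for each bet size). -/
def IsStrat2 (n : ℕ) (s : ℕ → ℝ) : Prop :=
  ∀ x, 0 ≤ s x ∧ s x ≤ 1

/-- Player 1's payoff with hand `h` after betting `x`, when player 2 calls a bet of
size `x` with probability `s2 x`: a check yields ±0.5, a called bet of `x` yields
±(0.5 + x), and a fold yields +0.5. -/
noncomputable def pay (s2 : ℕ → ℝ) (h : Bool) (x : ℕ) : ℝ :=
  if x = 0 then (if h then 0.5 else -0.5)
  else s2 x * (if h then (0.5 + (x : ℝ)) else -(0.5 + (x : ℝ))) + (1 - s2 x) * 0.5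

/-- Player 1's expected payoff (hands equiprobable); the game is zero-sum. -/
noncomputable def u1 (n : ℕ) (s1 : Bool → ℕ → ℝ) (s2 : ℕ → ℝ) : ℝ :=
  (1/2) * ∑ x ∈ Finset.range (n + 1), s1 true x * pay s2 true x
    + (1/2) * ∑ x ∈ Finset.range (n + 1), s1 false x * pay s2 false x

/-- `(s1, s2)` is a Nash equilibrium of the (zero-sum) clairvoyance game:
no unilateral profitable deviation. -/
def IsNash (n : ℕ) (s1 : Bool → ℕ → ℝ) (s2 : ℕ → ℝ) : Prop :=
  IsStrat1 n s1 ∧ IsStrat2 n s2 ∧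
  (∀ s1', IsStrat1 n s1' → u1 n s1' s2 ≤ u1 n s1 s2) ∧
  (∀ s2', IsStrat2 n s2' → u1 n s1 s2 ≤ u1 n s1 s2')

/-- Nash equilibrium of the perturbed game `G_ε` (with `n = 2`) in which player 1 must
bet 1 with total probability (over the winning and losing hand) at least `ε`. -/
def IsNashPert (ε : ℝ) (s1 : Bool → ℕ → ℝ) (s2 : ℕ → ℝ) : Prop :=
  IsStrat1 2 s1 ∧ ε ≤ s1 true 1 + s1 false 1 ∧ IsStrat2 2 s2 ∧
  (∀ s1', IsStrat1 2 s1' → ε ≤ s1' true 1 + s1' false 1 →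
    u1 2 s1' s2 ≤ u1 2 s1 s2) ∧
  (∀ s2', IsStrat2 2 s2' → u1 2 s1 s2 ≤ u1 2 s1 s2')

/-!
Against the calling frequencies `1/3` (bet 2) and `5/9` (bet 1), a winning hand earns
`1/2, 19/18, 7/6` and a losing hand `-1/2, -11/18, -1/2` for checking, betting 1 and betting 2.
So betting 1 costs exactly `1/9` against the best reply with either hand, and a bettor forced
to bet 1 with total probability `ε` loses at least `ε/18` relative to the value `1/3`.
Conversely, the bettor's bluffing ratios at both sizes make every calling frequency equally
good for player 2, so player 1's payoff does not depend on player 2's strategy.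
-/

noncomputable def perturbedBettor (ε : ℝ) : Bool → ℕ → ℝ := fun h x =>
  if h then (if x = 2 then 1 - 2*ε/3 else if x = 1 then 2*ε/3 else 0)
  else (if x = 2 then 2*(3 - 2*ε)/9 else if x = 1 then ε/3
        else if x = 0 then (3 + ε)/9 else 0)

noncomputable def perturbedCaller : ℕ → ℝ := fun x => if x = 2 then 1/3 else 5/9

lemma pay_true_of_ne_zero (s2 : ℕ → ℝ) {x : ℕ} (hx : x ≠ 0) :
    pay s2 true x = 1/2 + x * s2 x := by
  simp only [pay, hx, if_false, if_true]
  ring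

lemma pay_false_of_ne_zero (s2 : ℕ → ℝ) {x : ℕ} (hx : x ≠ 0) :
    pay s2 false x = 1/2 - (x + 1) * s2 x := by
  simp only [pay, hx, if_false, Bool.false_eq_true]
  ring

lemma u1_two (s1 : Bool → ℕ → ℝ) (s2 : ℕ → ℝ) :
    u1 2 s1 s2 =
      (1/2) * (s1 true 0 / 2 + s1 true 1 * (1/2 + s2 1) + s1 true 2 * (1/2 + 2 * s2 2))
        + (1/2) * (-(s1 false 0 / 2) + s1 false 1 * (1/2 - 2 * s2 1)
          + s1 false 2 * (1/2 - 3 * s2 2)) := by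
  simp only [u1, Finset.sum_range_succ, Finset.sum_range_zero,
    pay_true_of_ne_zero s2 one_ne_zero, pay_true_of_ne_zero s2 two_ne_zero,
    pay_false_of_ne_zero s2 one_ne_zero, pay_false_of_ne_zero s2 two_ne_zero]
  simp only [pay, if_true, Bool.false_eq_true, if_false]
  push_cast
  ring

lemma isStrat1_two_iff (s : Bool → ℕ → ℝ) :
    IsStrat1 2 s ↔ (∀ h x, 0 ≤ s h x) ∧ ∀ h, s h 0 + s h 1 + s h 2 = 1 := by
  simp only [IsStrat1, Finset.sum_range_succ, Finset.sum_range_zero, zero_add]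

lemma isStrat1_perturbedBettor {ε : ℝ} (h0 : 0 ≤ ε) (h1 : ε ≤ 3/2) :
    IsStrat1 2 (perturbedBettor ε) := by
  refine (isStrat1_two_iff _).2 ⟨fun h x => ?_, fun h => ?_⟩
  · cases h <;> simp only [perturbedBettor, Bool.false_eq_true, if_true, if_false] <;>
      split_ifs <;> linarith
  · cases h <;> norm_num [perturbedBettor]
    ring

lemma isStrat2_perturbedCaller : IsStrat2 2 perturbedCaller := by
  intro x
  simp only [perturbedCaller]
  split_ifs <;> norm_num

lemma u1_perturbedCaller {s : Bool → ℕ → ℝ} (hs : IsStrat1 2 s) :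
    u1 2 s perturbedCaller = 1/3 - s true 0 / 3 - (s true 1 + s false 1) / 18 := by
  obtain ⟨-, hsum⟩ := (isStrat1_two_iff s).1 hs
  have htrue := hsum true
  have hfalse := hsum false
  rw [u1_two]
  norm_num [perturbedCaller]
  linarith

lemma u1_perturbedBettor (ε : ℝ) (s2 : ℕ → ℝ) :
    u1 2 (perturbedBettor ε) s2 = 1/3 - ε/18 := by
  rw [u1_two]
  norm_num [perturbedBettor]
  ring

/-- In the perturbed clairvoyance game `G_ε` (with `n = 2`, and player 1 required to
bet 1 with total probability at least `ε`), the profile where player 1 bets 2 with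
probability `1 - 2ε/3` and 1 with probability `2ε/3` with a winning hand; bets 2 with
probability `2(3-2ε)/9`, bets 1 with probability `ε/3`, and checks with probability
`(3+ε)/9` with a losing hand; and player 2 calls a bet of 2 with probability 1/3 and a
bet of 1 with probability 5/9, is a Nash equilibrium of `G_ε`, and player 1's expected
payoff equals `1/3 - ε/18`. -/
theorem perturbed_equilibrium_five_ninths (ε : ℝ) (hε : 0 < ε) (hε1 : ε ≤ 1)
    (s1 : Bool → ℕ → ℝ)
    (hs1 : s1 = fun h x =>
      if h then (if x = 2 then 1 - 2*ε/3 else if x = 1 then 2*ε/3 else 0)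
      else (if x = 2 then 2*(3 - 2*ε)/9 else if x = 1 then ε/3
            else if x = 0 then (3 + ε)/9 else 0))
    (s2 : ℕ → ℝ) (hs2 : s2 = fun x => if x = 2 then 1/3 else 5/9) :
    IsNashPert ε s1 s2 ∧ u1 2 s1 s2 = 1/3 - ε/18 := by
  obtain rfl : s1 = perturbedBettor ε := hs1
  obtain rfl : s2 = perturbedCaller := hs2
  have hvalue := u1_perturbedBettor ε perturbedCaller
  have hbet_one : ε ≤ perturbedBettor ε true 1 + perturbedBettor ε false 1 := by
    norm_num [perturbedBettor]
    linarith
  refine ⟨⟨isStrat1_perturbedBettor hε.le (by linarith), hbet_one, isStrat2_perturbedCaller,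
    fun s hs hs_one => ?_, fun s2 _ => by rw [hvalue, u1_perturbedBettor]⟩, hvalue⟩
  have hcheck := ((isStrat1_two_iff s).1 hs).1 true 0
  rw [hvalue, u1_perturbedCaller hs]
  linarith
end

section
/- In the no-limit clairvoyance game with n = 2, for every Nash equilibrium calling probability α ∈ [1/2, 2/3] vs. a bet of 1, there exists a sequence of totally mixed strategies for player 1 converging to the unique equilibrium strategy of player 1 against each of which player 2's equilibrium strategy is a best response: namely, player 1 bets 1 with probability ε with a winning hand and ε/2 with a losing hand (remaining mass as in equilibrium), which makes player 2 exactly indifferent between calling and folding a bet of 1. -/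
open Filter

/-! Player 1 perturbs the equilibrium so that at every bet size `x ≥ 1` the losing hand bets
`x / (x + 1)` times as often as the winning hand. Then calling a bet of `x` gains player 2
exactly what folding does, so `u1` does not depend on player 2's strategy at all, and every
strategy of player 2, in particular the equilibrium one, is a best response. -/

lemma mul_pay_true_add_mul_pay_false (s2 : ℕ → ℝ) (p q : ℝ) {x : ℕ} (hx : x ≠ 0) :
    p * pay s2 true x + q * pay s2 false x = (p + q) / 2 + s2 x * (p * x - q * (x + 1)) := by
  simp only [pay, hx, if_false, if_true, Bool.false_eq_true]
  ring

lemma u1_eq_of_indifferent {n : ℕ} {s1 : Bool → ℕ → ℝ}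
    (hind : ∀ x ∈ Finset.range (n + 1), x ≠ 0 → s1 true x * x = s1 false x * (x + 1))
    (s2 s2' : ℕ → ℝ) : u1 n s1 s2 = u1 n s1 s2' := by
  simp only [u1, ← mul_add, ← Finset.sum_add_distrib]
  congr 1
  refine Finset.sum_congr rfl fun x hx => ?_
  rcases eq_or_ne x 0 with rfl | hx0
  · simp [pay]
  · rw [mul_pay_true_add_mul_pay_false _ _ _ hx0, mul_pay_true_add_mul_pay_false _ _ _ hx0,
      hind x hx hx0, sub_self, mul_zero, mul_zero]

noncomputable def perturbedStrat (ε : ℝ) : Bool → ℕ → ℝ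
  | true, 0 => ε
  | true, 1 => ε
  | true, 2 => 1 - 2 * ε
  | false, 0 => 1/3 + 5/6 * ε
  | false, 1 => ε / 2
  | false, 2 => 2/3 - 4/3 * ε
  | _, _ => 0

section perturbedStrat

variable {ε : ℝ}

lemma perturbedStrat_pos (hε : 0 < ε) (hε' : ε < 1/2) {h : Bool} {x : ℕ} (hx : x ≤ 2) :
    0 < perturbedStrat ε h x := by
  interval_cases x <;> cases h <;> simp only [perturbedStrat] <;> linarith

lemma isStrat1_perturbedStrat (hε : 0 < ε) (hε' : ε < 1/2) : IsStrat1 2 (perturbedStrat ε) := by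
  refine ⟨fun h x => ?_, fun h => ?_⟩
  · rcases le_or_gt x 2 with hx | hx
    · exact (perturbedStrat_pos hε hε' hx).le
    · obtain ⟨y, rfl⟩ : ∃ y, x = y + 3 := ⟨x - 3, by omega⟩
      cases h <;> simp [perturbedStrat]
  · cases h <;> simp only [Finset.sum_range_succ, Finset.sum_range_zero, perturbedStrat] <;> ring

lemma perturbedStrat_indifferent :
    ∀ x ∈ Finset.range 3, x ≠ 0 →
      perturbedStrat ε true x * x = perturbedStrat ε false x * (x + 1) := by
  simp only [Finset.mem_range]
  intro x hx hx0
  interval_cases x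
  · exact absurd rfl hx0
  all_goals simp only [perturbedStrat]; push_cast; ring

lemma continuous_perturbedStrat (h : Bool) (x : ℕ) : Continuous fun ε => perturbedStrat ε h x := by
  match h, x with
  | true, 0 | true, 1 | true, 2 | false, 0 | false, 1 | false, 2 =>
    simp only [perturbedStrat]; fun_prop
  | true, _ + 3 | false, _ + 3 => exact continuous_const

end perturbedStrat

theorem thpe_characterization_fails_in_extensive_form_general
    (s1eq : Bool → ℕ → ℝ)
    (hs1eq : s1eq = fun h x => if h then (if x = 2 then 1 else 0)
      else (if x = 2 then 2/3 else if x = 0 then 1/3 else 0))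
    (s2 : ℕ → ℝ) :
    ∃ e : ℕ → ℝ, (∀ k, 0 < e k) ∧ Tendsto e atTop (nhds 0) ∧
    ∃ t : ℕ → Bool → ℕ → ℝ,
      (∀ k, IsStrat1 2 (t k) ∧ ∀ h x, x ≤ 2 → 0 < t k h x) ∧
      (∀ k, t k true 1 = e k ∧ t k false 1 = e k / 2) ∧
      (∀ k, t k true 1 * (-1.5) + t k false 1 * 1.5
        = (t k true 1 + t k false 1) * (-0.5)) ∧
      (∀ h x, Tendsto (fun k => t k h x) atTop (nhds (s1eq h x))) ∧
      (∀ k, ∀ s2', IsStrat2 2 s2' → u1 2 (t k) s2 ≤ u1 2 (t k) s2') := by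
  set e : ℕ → ℝ := fun k => 1 / ((k : ℝ) + 3)
  have he_pos (k : ℕ) : 0 < e k := by positivity
  have he_lt (k : ℕ) : e k < 1/2 := by
    simp only [e]
    rw [div_lt_div_iff₀ (by positivity) two_pos]
    linarith [(k.cast_nonneg : (0 : ℝ) ≤ k)]
  have he_tendsto : Tendsto e atTop (nhds 0) :=
    tendsto_one_div_add_atTop_nhds_zero_nat.comp (tendsto_add_atTop_nat 2) |>.congr
      fun k => by simp only [Function.comp, e]; push_cast; ring
  have hlimit : perturbedStrat 0 = s1eq := by
    funext h x
    subst hs1eq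
    cases h <;> rcases x with _ | _ | _ | x <;> simp [perturbedStrat]
  refine ⟨e, he_pos, he_tendsto, fun k => perturbedStrat (e k),
    fun k => ⟨isStrat1_perturbedStrat (he_pos k) (he_lt k),
      fun _ _ => perturbedStrat_pos (he_pos k) (he_lt k)⟩,
    fun k => ⟨rfl, rfl⟩, fun k => by simp only [perturbedStrat]; ring, fun h x => ?_,
    fun k s2' _ => (u1_eq_of_indifferent perturbedStrat_indifferent s2 s2').le⟩
  rw [← hlimit]
  exact ((continuous_perturbedStrat h x).tendsto 0).comp he_tendsto

/-- In the clairvoyance game with `n = 2`, for every Nash equilibrium calling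
probability `α ∈ [1/2, 2/3]` vs. a bet of 1 (with a bet of 2 called with probability
1/3), there is a sequence of totally mixed strategies for player 1 converging to
player 1's unique equilibrium strategy, betting 1 with probability `ε` with a winning
hand and `ε/2` with a losing hand, which makes player 2 exactly indifferent between
calling and folding a bet of 1, and against each of which player 2's equilibrium
strategy is a best response (player 2 minimizes `u1` in the zero-sum game). -/
theorem thpe_characterization_fails_in_extensive_form (α : ℝ)
    (h1 : 1/2 ≤ α) (h2 : α ≤ 2/3)
    (s1eq : Bool → ℕ → ℝ)
    (hs1eq : s1eq = fun h x => if h then (if x = 2 then 1 else 0)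
      else (if x = 2 then 2/3 else if x = 0 then 1/3 else 0))
    (s2 : ℕ → ℝ) (hs2 : s2 = fun x => if x = 2 then 1/3 else α) :
    ∃ e : ℕ → ℝ, (∀ k, 0 < e k) ∧ Tendsto e atTop (nhds 0) ∧
    ∃ t : ℕ → Bool → ℕ → ℝ,
      (∀ k, IsStrat1 2 (t k) ∧ ∀ h x, x ≤ 2 → 0 < t k h x) ∧
      (∀ k, t k true 1 = e k ∧ t k false 1 = e k / 2) ∧
      (∀ k, t k true 1 * (-1.5) + t k false 1 * 1.5
        = (t k true 1 + t k false 1) * (-0.5)) ∧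
      (∀ h x, Tendsto (fun k => t k h x) atTop (nhds (s1eq h x))) ∧
      (∀ k, ∀ s2', IsStrat2 2 s2' → u1 2 (t k) s2 ≤ u1 2 (t k) s2') :=
  thpe_characterization_fails_in_extensive_form_general s1eq hs1eq s2
end
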